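/- The conformal operator 𝒞 = t²∂_t + t x Δ_x T_x^{-1} + (1/2)m x² T_x^{-2} + t(1 − (1/2)T_x^{-1}) − (mσ²/8)T_x^{-2} satisfies [E, 𝒞] = 2t·E where E = Δ_x² − 2m∂_t and 2t denotes multiplication by 2t. In particular, 𝒞 maps solutions of Eφ = 0 to solutions. -/

import Mathlib

noncomputable section

/-- Forward space difference with step `σ`. -/
def Dx (σ : ℝ) (φ : ℝ → ℝ → ℝ) : ℝ → ℝ → ℝ := fun x t => (φ (x + σ) t - φ x t) / σ

/-- Inverse space shift `T_x^{-1}`. -/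
def Tinv (σ : ℝ) (φ : ℝ → ℝ → ℝ) : ℝ → ℝ → ℝ := fun x t => φ (x - σ) t

/-- Time derivative `∂_t`. -/
def Dt (φ : ℝ → ℝ → ℝ) : ℝ → ℝ → ℝ := fun x t => deriv (φ x) t

/-- Discrete conformal generator
`𝒞 = t²∂_t + t x Δ_x T_x^{-1} + (1/2)m x² T_x^{-2} + t(1 − (1/2)T_x^{-1}) − (mσ²/8)T_x^{-2}`. -/
def Cop (σ m : ℝ) (φ : ℝ → ℝ → ℝ) : ℝ → ℝ → ℝ :=
  fun x t => t^2 * Dt φ x t + t * x * Dx σ (Tinv σ φ) x t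
    + (1/2) * m * x^2 * Tinv σ (Tinv σ φ) x t
    + t * (φ x t - (1/2) * Tinv σ φ x t)
    - (m * σ^2 / 8) * Tinv σ (Tinv σ φ) x t

/-- Space-discretized Schrödinger operator `E = Δ_x² − 2m∂_t`. -/
def Eop (σ m : ℝ) (φ : ℝ → ℝ → ℝ) : ℝ → ℝ → ℝ :=
  fun x t => Dx σ (Dx σ φ) x t - 2 * m * Dt φ x t


lemma derivCop (σ m : ℝ) (φ : ℝ → ℝ → ℝ)
    (h1 : ∀ a s, HasDerivAt (φ a) (deriv (φ a) s) s)
    (h2 : ∀ a s, HasDerivAt (deriv (φ a)) (deriv (deriv (φ a)) s) s)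
    (a s : ℝ) :
    deriv (Cop σ m φ a) s =
      2*s*deriv (φ a) s + s^2*deriv (deriv (φ a)) s
      + a*((φ (a+σ-σ) s - φ (a-σ) s)/σ)
      + s*a*((deriv (φ (a+σ-σ)) s - deriv (φ (a-σ)) s)/σ)
      + (1/2*m*a^2)*deriv (φ (a-σ-σ)) s
      + ((φ a s - 1/2*φ (a-σ) s) + s*(deriv (φ a) s - 1/2*deriv (φ (a-σ)) s))
      - (m*σ^2/8)*deriv (φ (a-σ-σ)) s := by
  have H1 := (hasDerivAt_pow 2 s).mul (h2 a s)
  have H2 := ((hasDerivAt_id s).mul_const a).mul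
      (((h1 (a+σ-σ) s).sub (h1 (a-σ) s)).div_const σ)
  have H3 := (h1 (a-σ-σ) s).const_mul (1/2*m*a^2)
  have H4 := (hasDerivAt_id s).mul ((h1 a s).sub ((h1 (a-σ) s).const_mul (1/2)))
  have H5 := (h1 (a-σ-σ) s).const_mul (m*σ^2/8)
  have H := (((H1.add H2).add H3).add H4).sub H5
  exact H.deriv.trans (by norm_num [id_eq]; ring)

lemma derivEop (σ m : ℝ) (φ : ℝ → ℝ → ℝ)
    (h1 : ∀ a s, HasDerivAt (φ a) (deriv (φ a) s) s)
    (h2 : ∀ a s, HasDerivAt (deriv (φ a)) (deriv (deriv (φ a)) s) s)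
    (a s : ℝ) :
    deriv (Eop σ m φ a) s =
      ((deriv (φ (a+σ+σ)) s - deriv (φ (a+σ)) s)/σ
        - (deriv (φ (a+σ)) s - deriv (φ a) s)/σ)/σ
      - 2*m*deriv (deriv (φ a)) s := by
  have H := (((((h1 (a+σ+σ) s).sub (h1 (a+σ) s)).div_const σ).sub
      (((h1 (a+σ) s).sub (h1 a s)).div_const σ)).div_const σ).sub
      ((h2 a s).const_mul (2*m))
  exact H.deriv.trans (by ring)

theorem discrete_conformal_symmetry (σ m : ℝ) (hσ : σ ≠ 0)
    (φ : ℝ → ℝ → ℝ) (hφ : ContDiff ℝ (⊤ : ℕ∞) (fun p : ℝ × ℝ => φ p.1 p.2)) :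
    (∀ x t, Eop σ m (Cop σ m φ) x t - Cop σ m (Eop σ m φ) x t = 2 * t * Eop σ m φ x t) ∧
    ((∀ x t, Eop σ m φ x t = 0) → ∀ x t, Eop σ m (Cop σ m φ) x t = 0) := by
  have hx : ∀ a : ℝ, ContDiff ℝ (⊤ : ℕ∞) (φ a) := fun a =>
    hφ.comp (contDiff_const.prodMk contDiff_id)
  have h1 : ∀ a s, HasDerivAt (φ a) (deriv (φ a) s) s := fun a s =>
    ((hx a).differentiable (by simp) s).hasDerivAt
  have h2 : ∀ a s, HasDerivAt (deriv (φ a)) (deriv (deriv (φ a)) s) s := fun a s =>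
    (((contDiff_infty_iff_deriv.mp ((hx a).of_le (by simp))).2).differentiable
      (by simp) s).hasDerivAt
  have main : ∀ x t, Eop σ m (Cop σ m φ) x t - Cop σ m (Eop σ m φ) x t
      = 2 * t * Eop σ m φ x t := by
    intro x t
    have eC := derivCop σ m φ h1 h2 x t
    have eE := derivEop σ m φ h1 h2 x t
    simp only [Eop, Cop, Dx, Dt, Tinv]
    rw [eC, eE]
    ring_nf
    field_simp
    ring
  refine ⟨main, fun hsol x t => ?_⟩
  have h := main x t
  rw [hsol x t] at h
  have hz : Cop σ m (Eop σ m φ) x t = 0 := by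
    simp only [Cop, Dt, Dx, Tinv, hsol]
    have he : Eop σ m φ x = fun _ => (0:ℝ) := funext (hsol x)
    rw [he, deriv_const]
    ring
  linarith [h, hz]
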